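/- arXiv:1006.5596 — 2 statements merged into one kernel-verified Lean document; each statement's English description precedes it below -/
import Mathlib

section
/- Let v_0, v_1, v_2 be a path and w a vertex adjacent to all of v_0, v_1, v_2. Suppose lists of colors L(v_0), L(v_2) each have size 4, and L(v_1), L(w) each have size 5. Then there exist colors c_0 ∈ L(v_0), c_1 ∈ L(v_1), c_2 ∈ L(v_2) with c_0 ≠ c_1 and c_1 ≠ c_2, such that at most 2 of the colors c_0, c_1, c_2 lie in L(w) (counted as distinct elements of L(w) ∩ {c_0, c_1, c_2}). -/
/-- Base case of the nice-coloring lemma: a path `v₀ v₁ v₂` with lists of sizes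
4, 5, 4 and a common neighbor `w` with a list of size 5 can be properly colored
so that at most 2 of the chosen colors lie in `w`'s list. -/
theorem nice_coloring_base (L0 L1 L2 Lw : Finset ℕ)
    (h0 : L0.card = 4) (h1 : L1.card = 5) (h2 : L2.card = 4) (hw : Lw.card = 5) :
    ∃ c0 ∈ L0, ∃ c1 ∈ L1, ∃ c2 ∈ L2, c0 ≠ c1 ∧ c1 ≠ c2 ∧
      (Lw ∩ ({c0, c1, c2} : Finset ℕ)).card ≤ 2 := by
  by_cases hA : (L0 \ Lw).Nonempty
  · obtain ⟨c0, hc0⟩ := hA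
    obtain ⟨hc0L, hc0w⟩ := Finset.mem_sdiff.mp hc0
    have h1' : (L1 \ {c0}).Nonempty := by
      apply Finset.card_pos.mp
      have := Finset.le_card_sdiff ({c0} : Finset ℕ) L1
      simp [h1] at this
      omega
    obtain ⟨c1, hc1⟩ := h1'
    obtain ⟨hc1L, hc1n⟩ := Finset.mem_sdiff.mp hc1
    have h2' : (L2 \ {c1}).Nonempty := by
      apply Finset.card_pos.mp
      have := Finset.le_card_sdiff ({c1} : Finset ℕ) L2
      simp [h2] at this
      omega
    obtain ⟨c2, hc2⟩ := h2'
    obtain ⟨hc2L, hc2n⟩ := Finset.mem_sdiff.mp hc2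
    refine ⟨c0, hc0L, c1, hc1L, c2, hc2L, ?_, ?_, ?_⟩
    · intro h; exact hc1n (by simp [h])
    · intro h; exact hc2n (by simp [h])
    · calc (Lw ∩ ({c0, c1, c2} : Finset ℕ)).card
          ≤ ({c1, c2} : Finset ℕ).card := by
            apply Finset.card_le_card
            intro x hx
            simp only [Finset.mem_inter, Finset.mem_insert, Finset.mem_singleton] at hx ⊢
            rcases hx with ⟨hxw, hx0 | hx⟩
            · exact absurd (hx0 ▸ hxw) hc0w
            · exact hx
        _ ≤ 2 := by
            apply le_trans (Finset.card_insert_le _ _); simp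
  · by_cases hB : (L2 \ Lw).Nonempty
    · obtain ⟨c2, hc2⟩ := hB
      obtain ⟨hc2L, hc2w⟩ := Finset.mem_sdiff.mp hc2
      have h1' : (L1 \ {c2}).Nonempty := by
        apply Finset.card_pos.mp
        have := Finset.le_card_sdiff ({c2} : Finset ℕ) L1
        simp [h1] at this
        omega
      obtain ⟨c1, hc1⟩ := h1'
      obtain ⟨hc1L, hc1n⟩ := Finset.mem_sdiff.mp hc1
      have h0' : (L0 \ {c1}).Nonempty := by
        apply Finset.card_pos.mp
        have := Finset.le_card_sdiff ({c1} : Finset ℕ) L0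
        simp [h0] at this
        omega
      obtain ⟨c0, hc0⟩ := h0'
      obtain ⟨hc0L, hc0n⟩ := Finset.mem_sdiff.mp hc0
      refine ⟨c0, hc0L, c1, hc1L, c2, hc2L, ?_, ?_, ?_⟩
      · intro h; exact hc0n (by simp [h])
      · intro h; exact hc1n (by simp [h])
      · calc (Lw ∩ ({c0, c1, c2} : Finset ℕ)).card
            ≤ ({c0, c1} : Finset ℕ).card := by
              apply Finset.card_le_card
              intro x hx
              simp only [Finset.mem_inter, Finset.mem_insert, Finset.mem_singleton] at hx ⊢
              rcases hx with ⟨hxw, hx0 | hx1 | hx2⟩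
              · exact Or.inl hx0
              · exact Or.inr hx1
              · exact absurd (hx2 ▸ hxw) hc2w
          _ ≤ 2 := by
              apply le_trans (Finset.card_insert_le _ _); simp
    · -- L0 ⊆ Lw and L2 ⊆ Lw, so L0 ∩ L2 nonempty
      have hs0 : L0 ⊆ Lw := by
        intro x hx
        by_contra hxx
        exact hA ⟨x, Finset.mem_sdiff.mpr ⟨hx, hxx⟩⟩
      have hs2 : L2 ⊆ Lw := by
        intro x hx
        by_contra hxx
        exact hB ⟨x, Finset.mem_sdiff.mpr ⟨hx, hxx⟩⟩
      have hunion : (L0 ∪ L2).card ≤ 5 := by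
        rw [← hw]
        exact Finset.card_le_card (Finset.union_subset hs0 hs2)
      have hint : (L0 ∩ L2).Nonempty := by
        apply Finset.card_pos.mp
        have := Finset.card_union_add_card_inter L0 L2
        omega
      obtain ⟨c, hc⟩ := hint
      obtain ⟨hcL0, hcL2⟩ := Finset.mem_inter.mp hc
      have h1' : (L1 \ {c}).Nonempty := by
        apply Finset.card_pos.mp
        have := Finset.le_card_sdiff ({c} : Finset ℕ) L1
        simp [h1] at this
        omega
      obtain ⟨c1, hc1⟩ := h1'
      obtain ⟨hc1L, hc1n⟩ := Finset.mem_sdiff.mp hc1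
      refine ⟨c, hcL0, c1, hc1L, c, hcL2, ?_, ?_, ?_⟩
      · intro h; exact hc1n (by simp [h])
      · intro h; exact hc1n (by simp [h])
      · calc (Lw ∩ ({c, c1, c} : Finset ℕ)).card
            ≤ ({c, c1} : Finset ℕ).card := by
              apply Finset.card_le_card
              intro x hx
              simp only [Finset.mem_inter, Finset.mem_insert, Finset.mem_singleton] at hx ⊢
              tauto
          _ ≤ 2 := by
              apply le_trans (Finset.card_insert_le _ _); simp
end

section
/- Let m ≥ 1, let c_0 ≠ c_1 be two fixed colors, let L_2, ..., L_m be sets of colors each of size 5, and let W_1, ..., W_{m-1} be sets of colors each of size 5. Then there exist colors c_2, ..., c_m with c_i ∈ L_i and c_i ≠ c_{i-1} for each 2 ≤ i ≤ m, such that for every 1 ≤ i ≤ m-1, |W_i ∩ {c_{i-1}, c_i, c_{i+1}}| ≤ 2. -/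
open Finset

/-- Greedy choice of the next color: given list `Ls`, constraint set `Ws`, and the two
previous colors `a`, `b`. -/
noncomputable def pickColor (Ls Ws : Finset ℕ) (a b : ℕ) : ℕ :=
  if a ∈ Ws ∧ b ∈ Ws then
    if a ∈ Ls then a
    else if h : (Ls \ Ws).Nonempty then h.choose else 0
  else if h : (Ls \ {b}).Nonempty then h.choose else 0

lemma pickColor_spec (Ls Ws : Finset ℕ) (a b : ℕ) (hLs : Ls.card = 5)
    (hWs : Ws.card = 5) (hab : a ≠ b) :
    pickColor Ls Ws a b ∈ Ls ∧ pickColor Ls Ws a b ≠ b ∧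
      (a ∈ Ws → b ∈ Ws → pickColor Ls Ws a b = a ∨ pickColor Ls Ws a b ∉ Ws) := by
  unfold pickColor
  by_cases hWab : a ∈ Ws ∧ b ∈ Ws
  · rw [if_pos hWab]
    by_cases haL : a ∈ Ls
    · rw [if_pos haL]
      exact ⟨haL, hab, fun _ _ => Or.inl rfl⟩
    · have hne : (Ls \ Ws).Nonempty := by
        rw [Finset.sdiff_nonempty]
        intro hsub
        have : Ls = Ws := Finset.eq_of_subset_of_card_le hsub (by omega)
        exact haL (this ▸ hWab.1)
      rw [if_neg haL, dif_pos hne]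
      have hmem := hne.choose_spec
      rw [Finset.mem_sdiff] at hmem
      refine ⟨hmem.1, ?_, fun _ _ => Or.inr hmem.2⟩
      intro heq
      exact hmem.2 (heq ▸ hWab.2)
  · rw [if_neg hWab]
    have hne : (Ls \ {b}).Nonempty := by
      rw [Finset.sdiff_nonempty]
      intro hsub
      have := Finset.card_le_card hsub
      simp [hLs] at this
    rw [dif_pos hne]
    have hmem := hne.choose_spec
    rw [Finset.mem_sdiff, Finset.mem_singleton] at hmem
    exact ⟨hmem.1, hmem.2, fun ha hb => absurd ⟨ha, hb⟩ hWab⟩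

lemma inter_triple_le_two (Ws : Finset ℕ) (a b x : ℕ)
    (h : a ∉ Ws ∨ b ∉ Ws ∨ x = a ∨ x ∉ Ws) :
    (Ws ∩ ({a, b, x} : Finset ℕ)).card ≤ 2 := by
  have pair : ∀ u v : ℕ, ({u, v} : Finset ℕ).card ≤ 2 := by
    intro u v
    refine le_trans (Finset.card_insert_le _ _) ?_
    simp
  rcases h with h | h | h | h
  · refine le_trans (Finset.card_le_card (t := ({b, x} : Finset ℕ)) ?_) (pair b x)
    intro y hy
    simp only [Finset.mem_inter, Finset.mem_insert, Finset.mem_singleton] at hy ⊢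
    rcases hy.2 with rfl | h' | h'
    · exact absurd hy.1 h
    · exact Or.inl h'
    · exact Or.inr h'
  · refine le_trans (Finset.card_le_card (t := ({a, x} : Finset ℕ)) ?_) (pair a x)
    intro y hy
    simp only [Finset.mem_inter, Finset.mem_insert, Finset.mem_singleton] at hy ⊢
    rcases hy.2 with h' | rfl | h'
    · exact Or.inl h'
    · exact absurd hy.1 h
    · exact Or.inr h'
  · refine le_trans (Finset.card_le_card (t := ({a, b} : Finset ℕ)) ?_) (pair a b)
    intro y hy
    simp only [Finset.mem_inter, Finset.mem_insert, Finset.mem_singleton] at hy ⊢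
    rcases hy.2 with h' | h' | h'
    · exact Or.inl h'
    · exact Or.inr h'
    · exact Or.inl (h'.trans h)
  · refine le_trans (Finset.card_le_card (t := ({a, b} : Finset ℕ)) ?_) (pair a b)
    intro y hy
    simp only [Finset.mem_inter, Finset.mem_insert, Finset.mem_singleton] at hy ⊢
    rcases hy.2 with h' | h' | rfl
    · exact Or.inl h'
    · exact Or.inr h'
    · exact absurd hy.1 h

/-- Combinatorial core of the nice-coloring lemma: colors `c 0 = c₀ ≠ c₁ = c 1` being
fixed, one can pick `c i ∈ L i` (`2 ≤ i ≤ m`) with consecutive colors distinct so that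
each size-5 constraint set `W i` (`1 ≤ i ≤ m - 1`) meets `{c (i-1), c i, c (i+1)}` in
at most 2 colors. -/
theorem nice_coloring_along_path (m : ℕ) (hm : 1 ≤ m) (c0 c1 : ℕ) (hc : c0 ≠ c1)
    (L : ℕ → Finset ℕ) (hL : ∀ i, 2 ≤ i → i ≤ m → (L i).card = 5)
    (W : ℕ → Finset ℕ) (hW : ∀ i, 1 ≤ i → i ≤ m - 1 → (W i).card = 5) :
    ∃ c : ℕ → ℕ, c 0 = c0 ∧ c 1 = c1 ∧
      (∀ i, 2 ≤ i → i ≤ m → c i ∈ L i ∧ c i ≠ c (i - 1)) ∧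
      (∀ i, 1 ≤ i → i ≤ m - 1 →
        (W i ∩ ({c (i - 1), c i, c (i + 1)} : Finset ℕ)).card ≤ 2) := by
  classical
  set f : ℕ → ℕ × ℕ := fun n =>
    Nat.rec (c0, c1)
      (fun n p => (p.2, pickColor (L (n + 2)) (W (n + 1)) p.1 p.2)) n with hf
  have hfs : ∀ n, f (n + 1) =
      ((f n).2, pickColor (L (n + 2)) (W (n + 1)) (f n).1 (f n).2) := fun n => rfl
  set c : ℕ → ℕ := fun n => (f n).1 with hcdef
  have hc0 : c 0 = c0 := rfl
  have hc1 : c 1 = c1 := rfl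
  have hsnd : ∀ n, (f n).2 = c (n + 1) := by
    intro n
    show (f n).2 = (f (n + 1)).1
    rw [hfs n]
  have key : ∀ n, c (n + 2) = pickColor (L (n + 2)) (W (n + 1)) (c n) (c (n + 1)) :=
    fun n => rfl
  -- cards needed
  have spec : ∀ n, n + 2 ≤ m → c n ≠ c (n + 1) →
      c (n + 2) ∈ L (n + 2) ∧ c (n + 2) ≠ c (n + 1) ∧
        (c n ∈ W (n + 1) → c (n + 1) ∈ W (n + 1) →
          c (n + 2) = c n ∨ c (n + 2) ∉ W (n + 1)) := by
    intro n hn hne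
    rw [key n]
    exact pickColor_spec _ _ _ _ (hL (n + 2) (by omega) hn)
      (hW (n + 1) (by omega) (by omega)) hne
  have dist : ∀ n, n + 1 ≤ m → c (n + 1) ≠ c n := by
    intro n
    induction n with
    | zero => intro _; exact fun h => hc (h.symm)
    | succ k ih =>
      intro h
      exact (spec k h (Ne.symm (ih (by omega)))).2.1
  refine ⟨c, hc0, hc1, ?_, ?_⟩
  · intro i h2 hi
    obtain ⟨n, rfl⟩ : ∃ n, i = n + 2 := ⟨i - 2, by omega⟩
    have hs := spec n hi (Ne.symm (dist n (by omega)))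
    have : n + 2 - 1 = n + 1 := by omega
    rw [this]
    exact ⟨hs.1, hs.2.1⟩
  · intro i h1 hi
    obtain ⟨n, rfl⟩ : ∃ n, i = n + 1 := ⟨i - 1, by omega⟩
    have hs := spec n (by omega) (Ne.symm (dist n (by omega)))
    have h' : n + 1 - 1 = n := by omega
    rw [h']
    apply inter_triple_le_two
    by_cases ha : c n ∈ W (n + 1)
    · by_cases hb : c (n + 1) ∈ W (n + 1)
      · rcases hs.2.2 ha hb with h | h
        · exact Or.inr (Or.inr (Or.inl h))
        · exact Or.inr (Or.inr (Or.inr h))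
      · exact Or.inr (Or.inl hb)
    · exact Or.inl ha
end
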